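/- arXiv:2504.17756 — 2 statements merged into one kernel-verified Lean document; each statement's English description precedes it below -/
import Mathlib

section
/- Let P₁, P₂, P₃ be sets of polynomials in ℝ[x₁,…,xₙ]. Assume: (i) for every p ∈ P₁ and every ε > 0, both p + ε and −p + ε lie in Σ + ⟨P₂⟩; (ii) for every q ∈ P₂ and every ε > 0, both q + ε and −q + ε lie in Σ + ⟨P₃⟩; and (iii) for every polynomial g ∈ ℝ[x₁,…,xₙ] there exists a real N > 0 such that N − (g² + 1) lies in Σ + ⟨P₃⟩. Then for every p ∈ P₁ and every ε > 0, both p + ε and −p + ε lie in Σ + ⟨P₃⟩. -/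
/-- A polynomial is a sum of squares. -/
def IsSOS {n : ℕ} (σ : MvPolynomial (Fin n) ℝ) : Prop :=
  ∃ (t : ℕ) (s : Fin t → MvPolynomial (Fin n) ℝ), σ = ∑ i, (s i) ^ 2

/-- `f` lies in `Σ + ⟨Q⟩`: it is a sum of squares plus an element of the ideal
generated by `Q`. -/
def MemSOSIdeal {n : ℕ} (Q : Set (MvPolynomial (Fin n) ℝ))
    (f : MvPolynomial (Fin n) ℝ) : Prop :=
  ∃ σ q, IsSOS σ ∧ q ∈ Ideal.span Q ∧ f = σ + q

/-!
Call `f` infinitesimal for `Q` if `f + ε` and `-f + ε` lie in `Σ + ⟨Q⟩` for all `ε > 0`.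
When `Σ + ⟨Q⟩` is archimedean (hypothesis (iii)), the infinitesimals form an ideal: closure under
multiplication by an arbitrary `f` comes from `f q = a² q - b² q` with `a = (f + 1) / 2`,
`b = (f - 1) / 2`, and `a² q + δ = a² (q + ε) + ε (N - a² - 1) + ε` for `ε = δ / N`, where
`N - a² - 1 ∈ Σ + ⟨Q⟩`. Hence hypothesis (ii) makes all of `⟨P₂⟩` infinitesimal for `P₃`, and
writing `±p + ε/2 = σ + q` with `q ∈ ⟨P₂⟩` gives `±p + ε = σ + (q + ε/2) ∈ Σ + ⟨P₃⟩`.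
-/

open MvPolynomial

variable {n : ℕ}

theorem isSOS_iff_isSumSq {σ : MvPolynomial (Fin n) ℝ} : IsSOS σ ↔ IsSumSq σ := by
  constructor
  · rintro ⟨t, s, rfl⟩
    exact IsSumSq.sum_sq _ s
  · intro h
    induction h with
    | zero => exact ⟨0, Fin.elim0, by simp⟩
    | sq_add a _ ih =>
      obtain ⟨t, s, rfl⟩ := ih
      exact ⟨t + 1, Fin.cons a s, by simp [Fin.sum_univ_succ, sq]⟩

theorem C_half_add_C_half {σ : Type*} (ε : ℝ) :
    (C (ε / 2) + C (ε / 2) : MvPolynomial σ ℝ) = C ε := by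
  rw [← map_add, add_halves]

namespace MemSOSIdeal

variable {Q : Set (MvPolynomial (Fin n) ℝ)} {f g : MvPolynomial (Fin n) ℝ}

theorem of_isSumSq (hf : IsSumSq f) : MemSOSIdeal Q f :=
  ⟨f, 0, isSOS_iff_isSumSq.mpr hf, (Ideal.span Q).zero_mem, (add_zero f).symm⟩

theorem C_of_nonneg {c : ℝ} (hc : 0 ≤ c) : MemSOSIdeal Q (C c) := by
  apply of_isSumSq
  rw [← Real.mul_self_sqrt hc, map_mul]
  exact IsSumSq.mul_self _

theorem add (hf : MemSOSIdeal Q f) (hg : MemSOSIdeal Q g) : MemSOSIdeal Q (f + g) := by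
  obtain ⟨σ, q, hσ, hq, rfl⟩ := hf
  obtain ⟨σ', q', hσ', hq', rfl⟩ := hg
  refine ⟨σ + σ', q + q', ?_, Ideal.add_mem _ hq hq', by ring⟩
  rw [isSOS_iff_isSumSq] at *
  exact hσ.add hσ'

theorem sq_mul (s : MvPolynomial (Fin n) ℝ) (hf : MemSOSIdeal Q f) :
    MemSOSIdeal Q (s ^ 2 * f) := by
  obtain ⟨σ, q, hσ, hq, rfl⟩ := hf
  refine ⟨s ^ 2 * σ, s ^ 2 * q, ?_, Ideal.mul_mem_left _ _ hq, by ring⟩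
  rw [isSOS_iff_isSumSq] at *
  exact (IsSquare.sq s).isSumSq.mul hσ

theorem C_mul {c : ℝ} (hc : 0 ≤ c) (hf : MemSOSIdeal Q f) : MemSOSIdeal Q (C c * f) := by
  rw [← Real.sq_sqrt hc, map_pow]
  exact sq_mul _ hf

end MemSOSIdeal

namespace SOSIdeal

variable {Q : Set (MvPolynomial (Fin n) ℝ)} {f q : MvPolynomial (Fin n) ℝ}

def IsArchimedean (Q : Set (MvPolynomial (Fin n) ℝ)) : Prop :=
  ∀ g : MvPolynomial (Fin n) ℝ, ∃ N : ℝ, 0 < N ∧ MemSOSIdeal Q (C N - (g ^ 2 + 1))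

def IsInfinitesimal (Q : Set (MvPolynomial (Fin n) ℝ)) (f : MvPolynomial (Fin n) ℝ) : Prop :=
  ∀ ε : ℝ, 0 < ε → MemSOSIdeal Q (f + C ε) ∧ MemSOSIdeal Q (-f + C ε)

theorem isInfinitesimal_zero : IsInfinitesimal Q 0 := fun ε hε => by
  simpa using MemSOSIdeal.C_of_nonneg hε.le

theorem IsInfinitesimal.neg (hf : IsInfinitesimal Q f) : IsInfinitesimal Q (-f) := fun ε hε => by
  simpa only [neg_neg] using (hf ε hε).symm

theorem IsInfinitesimal.add {g : MvPolynomial (Fin n) ℝ} (hf : IsInfinitesimal Q f)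
    (hg : IsInfinitesimal Q g) : IsInfinitesimal Q (f + g) := fun ε hε => by
  obtain ⟨hf₁, hf₂⟩ := hf (ε / 2) (half_pos hε)
  obtain ⟨hg₁, hg₂⟩ := hg (ε / 2) (half_pos hε)
  constructor
  · convert hf₁.add hg₁ using 1; rw [← C_half_add_C_half ε]; ring
  · convert hf₂.add hg₂ using 1; rw [← C_half_add_C_half ε]; ring

theorem IsInfinitesimal.sq_mul_add_C (hQ : IsArchimedean Q) (hq : IsInfinitesimal Q q)
    (a : MvPolynomial (Fin n) ℝ) {δ : ℝ} (hδ : 0 < δ) : MemSOSIdeal Q (a ^ 2 * q + C δ) := by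
  obtain ⟨N, hN, hbound⟩ := hQ a
  have hε : 0 < δ / N := div_pos hδ hN
  have hsum := (((hq _ hε).1.sq_mul a).add (hbound.C_mul hε.le)).add
    (MemSOSIdeal.C_of_nonneg (Q := Q) hε.le)
  convert hsum using 1
  have hδN : (C δ : MvPolynomial (Fin n) ℝ) = C (δ / N) * C N := by
    rw [← map_mul, div_mul_cancel₀ δ hN.ne']
  rw [hδN]; ring

theorem IsInfinitesimal.mul_add_C (hQ : IsArchimedean Q) (hq : IsInfinitesimal Q q)
    (f : MvPolynomial (Fin n) ℝ) {ε : ℝ} (hε : 0 < ε) : MemSOSIdeal Q (f * q + C ε) := by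
  have h₁ := hq.sq_mul_add_C hQ (C (1 / 2) * (f + 1)) (half_pos hε)
  have h₂ := hq.neg.sq_mul_add_C hQ (C (1 / 2) * (f - 1)) (half_pos hε)
  convert h₁.add h₂ using 1
  have hquarter : (C (1 / 2) : MvPolynomial (Fin n) ℝ) ^ 2 * 4 = 1 := by
    rw [← map_pow, ← map_ofNat C 4, ← map_mul]; norm_num
  linear_combination (-(f * q)) * hquarter - C_half_add_C_half ε

theorem IsInfinitesimal.mul_left (hQ : IsArchimedean Q) (hq : IsInfinitesimal Q q)
    (f : MvPolynomial (Fin n) ℝ) : IsInfinitesimal Q (f * q) := fun ε hε => by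
  refine ⟨hq.mul_add_C hQ f hε, ?_⟩
  simpa only [mul_neg] using hq.neg.mul_add_C hQ f hε

def infinitesimals (hQ : IsArchimedean Q) : Ideal (MvPolynomial (Fin n) ℝ) where
  carrier := {f | IsInfinitesimal Q f}
  zero_mem' := isInfinitesimal_zero
  add_mem' := IsInfinitesimal.add
  smul_mem' f _ hq := hq.mul_left hQ f

theorem _root_.MemSOSIdeal.add_C_of_isInfinitesimal {P : Set (MvPolynomial (Fin n) ℝ)}
    (hQ : IsArchimedean Q) (hP : ∀ q ∈ P, IsInfinitesimal Q q) (hf : MemSOSIdeal P f)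
    {δ : ℝ} (hδ : 0 < δ) :
    MemSOSIdeal Q (f + C δ) := by
  obtain ⟨σ, q, hσ, hq, rfl⟩ := hf
  have hq' : IsInfinitesimal Q q := (Ideal.span_le (I := infinitesimals hQ)).mpr hP hq
  rw [add_assoc]
  exact (MemSOSIdeal.of_isSumSq (isSOS_iff_isSumSq.mp hσ)).add (hq' δ hδ).1

theorem IsInfinitesimal.trans {P : Set (MvPolynomial (Fin n) ℝ)} (hQ : IsArchimedean Q)
    (hP : ∀ q ∈ P, IsInfinitesimal Q q) (hf : IsInfinitesimal P f) : IsInfinitesimal Q f := by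
  intro ε hε
  rw [← C_half_add_C_half ε, ← add_assoc, ← add_assoc]
  exact ⟨(hf _ (half_pos hε)).1.add_C_of_isInfinitesimal hQ hP (half_pos hε),
    (hf _ (half_pos hε)).2.add_C_of_isInfinitesimal hQ hP (half_pos hε)⟩

end SOSIdeal

theorem statement4 (n : ℕ) (P₁ P₂ P₃ : Set (MvPolynomial (Fin n) ℝ))
    (h12 : ∀ p ∈ P₁, ∀ ε : ℝ, 0 < ε →
      MemSOSIdeal P₂ (p + MvPolynomial.C ε) ∧ MemSOSIdeal P₂ (-p + MvPolynomial.C ε))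
    (h23 : ∀ q ∈ P₂, ∀ ε : ℝ, 0 < ε →
      MemSOSIdeal P₃ (q + MvPolynomial.C ε) ∧ MemSOSIdeal P₃ (-q + MvPolynomial.C ε))
    (harch : ∀ g : MvPolynomial (Fin n) ℝ, ∃ N : ℝ, 0 < N ∧
      MemSOSIdeal P₃ (MvPolynomial.C N - (g ^ 2 + 1))) :
    ∀ p ∈ P₁, ∀ ε : ℝ, 0 < ε →
      MemSOSIdeal P₃ (p + MvPolynomial.C ε) ∧ MemSOSIdeal P₃ (-p + MvPolynomial.C ε) :=
  fun p hp => SOSIdeal.IsInfinitesimal.trans harch h23 (h12 p hp)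
end

section
/- Fix n ≥ 1, k ≥ 1, reals ρ₁,…,ρ_{2k}, and polynomials f₁,…,f_m ∈ ℝ[x₁,…,xₙ]. Suppose a polynomial r has a PC derivation of degree d from {f₁,…,f_m} with domain polynomials dom₁,…,domₙ, and assume each fᵢ appearing with a nonzero coefficient has total degree at most d. Then for every real ε > 0 there exist a sum of squares σ and polynomials h₁,…,h_m, g₁,…,gₙ such that r + ε = σ + ∑_{i=1}^{m} hᵢ·fᵢ + ∑_{j=1}^{n} gⱼ·domⱼ, where σ and every product hᵢ·fᵢ and gⱼ·domⱼ have total degree at most 2(d+k); and likewise with r replaced by −r on the left-hand side. -/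
open MvPolynomial

/-- The domain polynomial of the variable `xⱼ`: `∏_{i=1}^{2k} (xⱼ - ρᵢ)`. -/
noncomputable def domPoly (n k : ℕ) (ρ : Fin (2 * k) → ℝ) (j : Fin n) :
    MvPolynomial (Fin n) ℝ :=
  ∏ i, (X j - C (ρ i))

/-- A Polynomial Calculus (PC) derivation of degree `d` from the axioms `f i`
with domain polynomials `domPoly n k ρ j`: every derived polynomial has total
degree at most `d`, and the derivation rules are: an axiom `f i`; a domain
polynomial; a real linear combination of two previously derived polynomials;
or a previously derived polynomial multiplied by a variable. -/
inductive PCDeriv {n k m : ℕ} (ρ : Fin (2 * k) → ℝ)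
    (f : Fin m → MvPolynomial (Fin n) ℝ) (d : ℕ) :
    MvPolynomial (Fin n) ℝ → Prop
  | axm (i : Fin m) (h : (f i).totalDegree ≤ d) : PCDeriv ρ f d (f i)
  | dom (j : Fin n) (h : (domPoly n k ρ j).totalDegree ≤ d) :
      PCDeriv ρ f d (domPoly n k ρ j)
  | lin (a b : ℝ) (p q : MvPolynomial (Fin n) ℝ) (hp : PCDeriv ρ f d p)
      (hq : PCDeriv ρ f d q) (h : (C a * p + C b * q).totalDegree ≤ d) :
      PCDeriv ρ f d (C a * p + C b * q)
  | mul (j : Fin n) (p : MvPolynomial (Fin n) ℝ) (hp : PCDeriv ρ f d p)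
      (h : (X j * p).totalDegree ≤ d) : PCDeriv ρ f d (X j * p)

/-!
By induction on the derivation, `ε - p²` has a certificate of degree `2(d + k)` for every derived
`p` and every `ε > 0`; then `±r + ε = ((±r + ε)² + (ε² - r²)) / (2ε)`.

* An axiom or domain polynomial `q` gives `ε - q² = ε + (-q) · q`.
* For a linear combination, with `c = 2a² + 2b² + 1`,
  `ε - (ap + bq)² = 2a² (ε/c - p²) + 2b² (ε/c - q²) + (ap - bq)² + ε/c`.
* For `xⱼ p`: the univariate polynomial `M + 2 domⱼ - xⱼ²` has even degree `2k` and positive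
  leading coefficient, so it is nonnegative for large `M`, hence a sum of squares (nonnegative
  real polynomials are: split off a double real root or a pair of conjugate roots and induct).
  Then `ε - xⱼ² p² = (M + 2 domⱼ - xⱼ²) p² - 2 p² domⱼ + M (ε/M - p²)`.
-/

open scoped Polynomial

theorem IsSumSq.map {R S F : Type*} [CommSemiring R] [CommSemiring S] [FunLike F R S]
    [RingHomClass F R S] (φ : F) {s : R} (hs : IsSumSq s) : IsSumSq (φ s) := by
  induction hs with
  | zero => simp
  | sq_add a _ ih => simpa using IsSumSq.sq_add (φ a) ih

theorem Real.isSumSq_of_nonneg {c : ℝ} (hc : 0 ≤ c) : IsSumSq c :=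
  IsSquare.isSumSq ⟨√c, (Real.mul_self_sqrt hc).symm⟩

namespace Polynomial

open Filter Topology

theorem exists_eq_X_sub_C_sq_mul_of_nonneg {p : ℝ[X]} (hp0 : p ≠ 0)
    (hp : ∀ x, 0 ≤ p.eval x) {r : ℝ} (hr : p.IsRoot r) :
    ∃ q : ℝ[X], p = (X - C r) ^ 2 * q ∧ ∀ x, 0 ≤ q.eval x := by
  -- `r` is a global minimum of `p`, so it is also a root of `p'`, hence a double root.
  have hmin : IsLocalMin (fun x => p.eval x) r :=
    IsMinOn.isLocalMin (fun x _ => by simpa [hr.eq_zero] using hp x) Filter.univ_mem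
  have hr' : (derivative p).IsRoot r := by
    simpa [Polynomial.deriv] using hmin.deriv_eq_zero
  obtain ⟨q, rfl⟩ := (le_rootMultiplicity_iff hp0).mp
    ((one_lt_rootMultiplicity_iff_isRoot hp0).mpr ⟨hr, hr'⟩)
  refine ⟨q, rfl, fun x => ?_⟩
  have hne : ∀ y ≠ r, 0 ≤ q.eval y := fun y hy =>
    nonneg_of_mul_nonneg_right (by simpa using hp y) (sq_pos_of_ne_zero (sub_ne_zero.mpr hy))
  have hr : 0 ≤ q.eval r := ge_of_tendsto
    (q.continuous.continuousAt.tendsto.mono_left (nhdsWithin_le_nhds (s := {r}ᶜ)))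
    (eventually_nhdsWithin_of_forall hne)
  exact (eq_or_ne x r).elim (fun h => h ▸ hr) (hne x)

theorem exists_eq_sq_add_sq_mul_of_nonneg {p : ℝ[X]} (hp : ∀ x, 0 ≤ p.eval x) {z : ℂ}
    (hz : aeval z p = 0) (him : z.im ≠ 0) :
    ∃ q : ℝ[X], p = ((X - C z.re) ^ 2 + C z.im ^ 2) * q ∧ ∀ x, 0 ≤ q.eval x := by
  obtain ⟨q, hq⟩ := p.quadratic_dvd_of_aeval_eq_zero_im_ne_zero hz him
  have hquad : X ^ 2 - C (2 * z.re) * X + C (‖z‖ ^ 2) = (X - C z.re) ^ 2 + C z.im ^ 2 := by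
    rw [Complex.sq_norm, Complex.normSq_apply]
    simp only [map_add, map_mul, map_ofNat]
    ring
  rw [hquad] at hq
  refine ⟨q, hq, fun x => ?_⟩
  have hpx := hp x
  rw [hq, eval_mul] at hpx
  refine nonneg_of_mul_nonneg_right hpx ?_
  simp only [eval_add, eval_pow, eval_sub, eval_X, eval_C]
  positivity

theorem isSumSq_of_forall_eval_nonneg {p : ℝ[X]} (hp : ∀ x, 0 ≤ p.eval x) : IsSumSq p := by
  induction hN : p.natDegree using Nat.strong_induction_on generalizing p with
  | _ N ih =>
  rcases eq_or_ne p 0 with rfl | hp0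
  · exact .zero
  rcases eq_or_ne N 0 with rfl | hN0
  · rw [eq_C_of_natDegree_eq_zero hN]
    exact (Real.isSumSq_of_nonneg (by simpa [coeff_zero_eq_eval_zero] using hp 0)).map C
  obtain ⟨z, hz⟩ : ∃ z : ℂ, aeval z p = 0 :=
    Complex.isAlgClosed.exists_aeval_eq_zero ℂ p (natDegree_pos_iff_degree_pos.mp (by omega)).ne'
  obtain ⟨a, q, haq, ha, hadeg, hq⟩ : ∃ a q : ℝ[X],
      p = a * q ∧ IsSumSq a ∧ a.natDegree = 2 ∧ ∀ x, 0 ≤ q.eval x := by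
    rcases eq_or_ne z.im 0 with him | him
    · lift z to ℝ using him
      obtain ⟨q, hpq, hq⟩ := exists_eq_X_sub_C_sq_mul_of_nonneg hp0 hp
        (by simpa [← Complex.coe_algebraMap, aeval_algebraMap_apply_eq_algebraMap_eval] using hz)
      exact ⟨_, q, hpq, (IsSquare.sq _).isSumSq, by simp, hq⟩
    · obtain ⟨q, hpq, hq⟩ := exists_eq_sq_add_sq_mul_of_nonneg hp hz him
      exact ⟨_, q, hpq, (IsSquare.sq _).isSumSq.add (IsSquare.sq _).isSumSq,
        by compute_degree!, hq⟩
  have hq0 : q ≠ 0 := by rintro rfl; simp_all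
  have ha0 : a ≠ 0 := by rintro rfl; simp_all
  rw [haq] at hN ⊢
  exact ha.mul (ih q.natDegree (by rw [← hN, natDegree_mul ha0 hq0]; omega) hq rfl)

theorem tendsto_eval_cocompact_atTop {P : ℝ[X]} (hdeg : 0 < P.natDegree)
    (heven : Even P.natDegree) (hlc : 0 < P.leadingCoeff) :
    Tendsto (fun x => P.eval x) (cocompact ℝ) atTop := by
  rw [← Metric.cobounded_eq_cocompact]
  refine isEquivalent_cobounded_leading_monomial.symm.tendsto_atTop ?_
  have := ((tendsto_pow_atTop hdeg.ne').comp
    (tendsto_norm_cobounded_atTop (E := ℝ))).const_mul_atTop hlc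
  simpa [Function.comp_def, heven.pow_abs] using this

theorem exists_isSumSq_C_add_two_mul_sub_X_sq {q : ℝ[X]} (hq : q.Monic)
    (heven : Even q.natDegree) (hpos : 0 < q.natDegree) :
    ∃ M : ℝ, 0 < M ∧ IsSumSq (C M + (2 * q - X ^ 2)) ∧
      (C M + (2 * q - X ^ 2)).natDegree ≤ q.natDegree := by
  set N := q.natDegree
  set P : ℝ[X] := 2 * q - X ^ 2
  have hN : 2 ≤ N := by obtain ⟨j, hj⟩ := heven; omega
  have hcoeff : 0 < P.coeff N := by
    simp only [P, coeff_sub, coeff_X_pow, coeff_ofNat_mul, N, hq.coeff_natDegree]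
    split_ifs <;> norm_num
  have hle : P.natDegree ≤ N := by
    refine (natDegree_sub_le _ _).trans (max_le (natDegree_mul_le.trans ?_) ?_) <;> simp [N, hN]
  have hPdeg : P.natDegree = N := natDegree_eq_of_le_of_coeff_ne_zero hle hcoeff.ne'
  obtain ⟨x₀, hx₀⟩ := P.continuous.exists_forall_le (tendsto_eval_cocompact_atTop
    (hPdeg ▸ hpos) (hPdeg ▸ heven) (by rwa [leadingCoeff, hPdeg]))
  refine ⟨|P.eval x₀| + 1, by positivity, isSumSq_of_forall_eval_nonneg fun x => ?_,
    by rw [natDegree_C_add, hPdeg]⟩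
  simp only [eval_add, eval_C]
  linarith [hx₀ x, neg_abs_le (P.eval x₀)]

end Polynomial

namespace MvPolynomial

variable {σ : Type*}

theorem totalDegree_C_mul_le (c : ℝ) (p : MvPolynomial σ ℝ) :
    (C c * p).totalDegree ≤ p.totalDegree := by
  rw [C_mul']
  exact totalDegree_smul_le c p

theorem totalDegree_mul_le_of_le {p q : MvPolynomial σ ℝ} {a b : ℕ} (hp : p.totalDegree ≤ a)
    (hq : q.totalDegree ≤ b) : (p * q).totalDegree ≤ a + b :=
  (totalDegree_mul p q).trans (add_le_add hp hq)

theorem totalDegree_toMvPolynomial_le (p : ℝ[X]) (i : σ) :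
    (p.toMvPolynomial i).totalDegree ≤ p.natDegree := by
  rw [Polynomial.toMvPolynomial, Polynomial.aeval_eq_sum_range]
  refine totalDegree_finsetSum_le fun l hl => ?_
  rw [smul_eq_C_mul]
  refine (totalDegree_C_mul_le _ _).trans ((totalDegree_pow _ _).trans ?_)
  rw [totalDegree_X, mul_one]
  exact Nat.lt_succ_iff.mp (Finset.mem_range.mp hl)

end MvPolynomial

theorem IsSumSq.isSOS {n : ℕ} {σ : MvPolynomial (Fin n) ℝ} (hσ : IsSumSq σ) : IsSOS σ := by
  induction hσ with
  | zero => exact ⟨0, ![], by simp⟩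
  | sq_add a _ ih =>
    obtain ⟨t, s, rfl⟩ := ih
    exact ⟨t + 1, Fin.cons a s, by simp [Fin.sum_univ_succ, sq]⟩

theorem IsSOS.isSumSq {n : ℕ} {σ : MvPolynomial (Fin n) ℝ} (hσ : IsSOS σ) : IsSumSq σ := by
  obtain ⟨t, s, rfl⟩ := hσ
  exact IsSumSq.sum_sq _ _

noncomputable def univDomPoly (k : ℕ) (ρ : Fin (2 * k) → ℝ) : ℝ[X] :=
  ∏ i, (Polynomial.X - Polynomial.C (ρ i))

theorem univDomPoly_monic (k : ℕ) (ρ : Fin (2 * k) → ℝ) : (univDomPoly k ρ).Monic :=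
  Polynomial.monic_prod_of_monic _ _ fun i _ => Polynomial.monic_X_sub_C (ρ i)

theorem natDegree_univDomPoly (k : ℕ) (ρ : Fin (2 * k) → ℝ) :
    (univDomPoly k ρ).natDegree = 2 * k := by
  rw [univDomPoly, Polynomial.natDegree_prod _ _ fun i _ => Polynomial.X_sub_C_ne_zero (ρ i)]
  simp

theorem domPoly_eq_toMvPolynomial (n k : ℕ) (ρ : Fin (2 * k) → ℝ) (j : Fin n) :
    domPoly n k ρ j = (univDomPoly k ρ).toMvPolynomial j := by
  simp [domPoly, univDomPoly, map_prod]

theorem totalDegree_domPoly_le (n k : ℕ) (ρ : Fin (2 * k) → ℝ) (j : Fin n) :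
    (domPoly n k ρ j).totalDegree ≤ 2 * k := by
  rw [domPoly_eq_toMvPolynomial]
  exact (totalDegree_toMvPolynomial_le _ _).trans (natDegree_univDomPoly k ρ).le

section PsatzCert

variable {n k m : ℕ} (ρ : Fin (2 * k) → ℝ) (f : Fin m → MvPolynomial (Fin n) ℝ)

def HasPsatzCert (D : ℕ) (p : MvPolynomial (Fin n) ℝ) : Prop :=
  ∃ (σ : MvPolynomial (Fin n) ℝ) (h : Fin m → MvPolynomial (Fin n) ℝ)
    (g : Fin n → MvPolynomial (Fin n) ℝ),
    IsSOS σ ∧ σ.totalDegree ≤ D ∧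
    (∀ i, (h i * f i).totalDegree ≤ D) ∧
    (∀ j, (g j * domPoly n k ρ j).totalDegree ≤ D) ∧
    p = σ + (∑ i, h i * f i) + ∑ j, g j * domPoly n k ρ j

variable {ρ f} {D : ℕ}

theorem hasPsatzCert_of_isSumSq {σ : MvPolynomial (Fin n) ℝ} (hσ : IsSumSq σ)
    (hD : σ.totalDegree ≤ D) : HasPsatzCert ρ f D σ :=
  ⟨σ, 0, 0, hσ.isSOS, hD, by simp, by simp, by simp⟩

theorem hasPsatzCert_C {c : ℝ} (hc : 0 ≤ c) : HasPsatzCert ρ f D (C c) :=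
  hasPsatzCert_of_isSumSq ((Real.isSumSq_of_nonneg hc).map C) (by simp)

theorem hasPsatzCert_mul_axiom (i₀ : Fin m) (h₀ : MvPolynomial (Fin n) ℝ)
    (hD : (h₀ * f i₀).totalDegree ≤ D) : HasPsatzCert ρ f D (h₀ * f i₀) := by
  refine ⟨0, Pi.single i₀ h₀, 0, IsSumSq.zero.isSOS, by simp, fun i => ?_, by simp,
    by simp [Pi.single_apply, ite_mul]⟩
  rcases eq_or_ne i i₀ with rfl | hi <;> simp [*]

theorem hasPsatzCert_mul_domPoly (j₀ : Fin n) (g₀ : MvPolynomial (Fin n) ℝ)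
    (hD : (g₀ * domPoly n k ρ j₀).totalDegree ≤ D) :
    HasPsatzCert ρ f D (g₀ * domPoly n k ρ j₀) := by
  refine ⟨0, 0, Pi.single j₀ g₀, IsSumSq.zero.isSOS, by simp, by simp, fun j => ?_,
    by simp [Pi.single_apply, ite_mul]⟩
  rcases eq_or_ne j j₀ with rfl | hj <;> simp [*]

theorem HasPsatzCert.add {p q : MvPolynomial (Fin n) ℝ} (hp : HasPsatzCert ρ f D p)
    (hq : HasPsatzCert ρ f D q) : HasPsatzCert ρ f D (p + q) := by
  obtain ⟨σ₁, h₁, g₁, hσ₁, hσ₁D, hh₁, hg₁, rfl⟩ := hp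
  obtain ⟨σ₂, h₂, g₂, hσ₂, hσ₂D, hh₂, hg₂, rfl⟩ := hq
  refine ⟨σ₁ + σ₂, h₁ + h₂, g₁ + g₂, (hσ₁.isSumSq.add hσ₂.isSumSq).isSOS,
    (totalDegree_add _ _).trans (max_le hσ₁D hσ₂D), fun i => ?_, fun j => ?_, ?_⟩
  · rw [Pi.add_apply, add_mul]
    exact (totalDegree_add _ _).trans (max_le (hh₁ i) (hh₂ i))
  · rw [Pi.add_apply, add_mul]
    exact (totalDegree_add _ _).trans (max_le (hg₁ j) (hg₂ j))
  · simp only [Pi.add_apply, add_mul, Finset.sum_add_distrib]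
    ring

theorem HasPsatzCert.C_mul {c : ℝ} (hc : 0 ≤ c) {p : MvPolynomial (Fin n) ℝ}
    (hp : HasPsatzCert ρ f D p) : HasPsatzCert ρ f D (C c * p) := by
  obtain ⟨σ, h, g, hσ, hσD, hh, hg, rfl⟩ := hp
  refine ⟨C c * σ, fun i => C c * h i, fun j => C c * g j,
    (((Real.isSumSq_of_nonneg hc).map C).mul hσ.isSumSq).isSOS,
    (totalDegree_C_mul_le _ _).trans hσD, fun i => ?_, fun j => ?_,
    by simp only [mul_add, Finset.mul_sum, mul_assoc]⟩
  · rw [mul_assoc]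
    exact (totalDegree_C_mul_le _ _).trans (hh i)
  · rw [mul_assoc]
    exact (totalDegree_C_mul_le _ _).trans (hg j)

theorem hasPsatzCert_C_sub_sq_C_mul_add_C_mul (a b : ℝ) {p q : MvPolynomial (Fin n) ℝ}
    (hpD : 2 * p.totalDegree ≤ D) (hqD : 2 * q.totalDegree ≤ D)
    (hp : ∀ ε : ℝ, 0 < ε → HasPsatzCert ρ f D (C ε - p ^ 2))
    (hq : ∀ ε : ℝ, 0 < ε → HasPsatzCert ρ f D (C ε - q ^ 2)) {ε : ℝ} (hε : 0 < ε) :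
    HasPsatzCert ρ f D (C ε - (C a * p + C b * q) ^ 2) := by
  obtain ⟨c, hc_def⟩ : ∃ c, c = 2 * a ^ 2 + 2 * b ^ 2 + 1 := ⟨_, rfl⟩
  have hc : 0 < c := by rw [hc_def]; positivity
  have hCc : (C c : MvPolynomial (Fin n) ℝ) = 2 * C a ^ 2 + 2 * C b ^ 2 + 1 := by
    rw [hc_def]
    simp only [map_add, map_mul, map_pow, map_one, map_ofNat]
  have hsplit :
      (C ε : MvPolynomial (Fin n) ℝ) = (2 * C a ^ 2 + 2 * C b ^ 2 + 1) * C (ε / c) := by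
    rw [← hCc, ← MvPolynomial.C_mul, mul_div_cancel₀ _ hc.ne']
  have hdiff : (C a * p - C b * q).totalDegree ≤ max p.totalDegree q.totalDegree :=
    (totalDegree_sub _ _).trans (max_le_max (totalDegree_C_mul_le _ _) (totalDegree_C_mul_le _ _))
  have hrest : HasPsatzCert ρ f D ((C a * p - C b * q) ^ 2 + C (ε / c)) :=
    (hasPsatzCert_of_isSumSq (IsSquare.sq _).isSumSq
      ((totalDegree_pow _ _).trans (by omega))).add (hasPsatzCert_C (by positivity))
  have hεc : 0 < ε / c := by positivity
  convert (((hp _ hεc).C_mul (c := 2 * a ^ 2) (by positivity)).add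
    ((hq _ hεc).C_mul (c := 2 * b ^ 2) (by positivity))).add hrest using 1
  simp only [map_mul, map_pow, map_ofNat]
  linear_combination hsplit

theorem hasPsatzCert_C_sub_sq_X_mul (hk : 1 ≤ k) (j : Fin n) {p : MvPolynomial (Fin n) ℝ}
    (hpD : 2 * p.totalDegree + 2 * k ≤ D)
    (hp : ∀ ε : ℝ, 0 < ε → HasPsatzCert ρ f D (C ε - p ^ 2)) {ε : ℝ} (hε : 0 < ε) :
    HasPsatzCert ρ f D (C ε - (X j * p) ^ 2) := by
  have hdeg := natDegree_univDomPoly k ρ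
  obtain ⟨M, hM, hs, hsdeg⟩ := Polynomial.exists_isSumSq_C_add_two_mul_sub_X_sq
    (univDomPoly_monic k ρ) (hdeg ▸ even_two_mul k) (by omega)
  have hp2 : (p ^ 2).totalDegree ≤ 2 * p.totalDegree := totalDegree_pow _ _
  have hsos := hasPsatzCert_of_isSumSq (ρ := ρ) (f := f) (D := D)
    ((hs.map (Polynomial.toMvPolynomial j)).mul (IsSquare.sq p).isSumSq)
    ((totalDegree_mul_le_of_le ((totalDegree_toMvPolynomial_le _ _).trans (hsdeg.trans hdeg.le))
      hp2).trans (by omega))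
  have hdom := hasPsatzCert_mul_domPoly (ρ := ρ) (f := f) (D := D) j (C (-2) * p ^ 2)
    ((totalDegree_mul_le_of_le ((totalDegree_C_mul_le (-2) _).trans hp2)
      (totalDegree_domPoly_le n k ρ j)).trans (by omega))
  have hMε : C M * C (ε / M) = (C ε : MvPolynomial (Fin n) ℝ) := by
    rw [← MvPolynomial.C_mul, mul_div_cancel₀ _ hM.ne']
  convert (hsos.add hdom).add ((hp (ε / M) (by positivity)).C_mul hM.le) using 1
  simp only [map_add, map_sub, map_mul, map_pow, map_neg, map_ofNat, Polynomial.toMvPolynomial_C,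
    Polynomial.toMvPolynomial_X, ← domPoly_eq_toMvPolynomial]
  linear_combination -hMε

theorem PCDeriv.totalDegree_le {d : ℕ} {p : MvPolynomial (Fin n) ℝ} (hp : PCDeriv ρ f d p) :
    p.totalDegree ≤ d := by
  cases hp <;> assumption

theorem PCDeriv.hasPsatzCert_C_sub_sq (hk : 1 ≤ k) {d : ℕ} {p : MvPolynomial (Fin n) ℝ}
    (hp : PCDeriv ρ f d p) :
    ∀ ε : ℝ, 0 < ε → HasPsatzCert ρ f (2 * (d + k)) (C ε - p ^ 2) := by
  induction hp with
  | axm i hi =>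
    intro ε hε
    rw [sub_eq_add_neg, sq, ← neg_mul]
    exact (hasPsatzCert_C hε.le).add (hasPsatzCert_mul_axiom i _
      ((totalDegree_mul_le_of_le ((totalDegree_neg _).trans_le hi) hi).trans (by omega)))
  | dom j hj =>
    intro ε hε
    rw [sub_eq_add_neg, sq, ← neg_mul]
    exact (hasPsatzCert_C hε.le).add (hasPsatzCert_mul_domPoly j _
      ((totalDegree_mul_le_of_le ((totalDegree_neg _).trans_le hj) hj).trans (by omega)))
  | lin a b p q hp hq _ ihp ihq =>
    exact fun ε => hasPsatzCert_C_sub_sq_C_mul_add_C_mul a b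
      (by linarith [hp.totalDegree_le]) (by linarith [hq.totalDegree_le]) ihp ihq
  | mul j p hp _ ihp =>
    exact fun ε => hasPsatzCert_C_sub_sq_X_mul hk j (by linarith [hp.totalDegree_le]) ihp

theorem HasPsatzCert.add_C_of_C_sq_sub_sq {p : MvPolynomial (Fin n) ℝ} {ε : ℝ} (hε : 0 < ε)
    (hpD : 2 * p.totalDegree ≤ D) (h : HasPsatzCert ρ f D (C (ε ^ 2) - p ^ 2)) :
    HasPsatzCert ρ f D (p + C ε) := by
  have hsq : HasPsatzCert ρ f D ((p + C ε) ^ 2) :=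
    hasPsatzCert_of_isSumSq (IsSquare.sq _).isSumSq ((totalDegree_pow _ _).trans
      ((Nat.mul_le_mul_left 2 ((totalDegree_add _ _).trans (max_le le_rfl (by simp)))).trans hpD))
  have hinv : C (2 * ε)⁻¹ * (2 * C ε) = (1 : MvPolynomial (Fin n) ℝ) := by
    rw [← map_ofNat C 2, ← MvPolynomial.C_mul, ← MvPolynomial.C_mul,
      inv_mul_cancel₀ (by positivity), C_1]
  convert (hsq.add h).C_mul (c := (2 * ε)⁻¹) (by positivity) using 1
  rw [map_pow]
  linear_combination (-(p + C ε)) * hinv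

end PsatzCert

theorem statement12_general (n k m d : ℕ) (hk : 1 ≤ k)
    (ρ : Fin (2 * k) → ℝ) (f : Fin m → MvPolynomial (Fin n) ℝ)
    (r : MvPolynomial (Fin n) ℝ) (hr : PCDeriv ρ f d r)
    (ε : ℝ) (hε : 0 < ε) :
    (∃ (σ : MvPolynomial (Fin n) ℝ) (h : Fin m → MvPolynomial (Fin n) ℝ)
      (g : Fin n → MvPolynomial (Fin n) ℝ),
      IsSOS σ ∧ σ.totalDegree ≤ 2 * (d + k) ∧
      (∀ i, (h i * f i).totalDegree ≤ 2 * (d + k)) ∧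
      (∀ j, (g j * domPoly n k ρ j).totalDegree ≤ 2 * (d + k)) ∧
      r + C ε = σ + (∑ i, h i * f i) + ∑ j, g j * domPoly n k ρ j) ∧
    (∃ (σ : MvPolynomial (Fin n) ℝ) (h : Fin m → MvPolynomial (Fin n) ℝ)
      (g : Fin n → MvPolynomial (Fin n) ℝ),
      IsSOS σ ∧ σ.totalDegree ≤ 2 * (d + k) ∧
      (∀ i, (h i * f i).totalDegree ≤ 2 * (d + k)) ∧
      (∀ j, (g j * domPoly n k ρ j).totalDegree ≤ 2 * (d + k)) ∧
      -r + C ε = σ + (∑ i, h i * f i) + ∑ j, g j * domPoly n k ρ j) := by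
  have hcert := hr.hasPsatzCert_C_sub_sq hk (ε ^ 2) (pow_pos hε 2)
  have hdeg : 2 * r.totalDegree ≤ 2 * (d + k) := by linarith [hr.totalDegree_le]
  refine ⟨hcert.add_C_of_C_sq_sub_sq hε hdeg, HasPsatzCert.add_C_of_C_sq_sub_sq hε ?_ ?_⟩
  · rwa [totalDegree_neg]
  · rwa [neg_sq]

theorem statement12 (n k m d : ℕ) (hn : 1 ≤ n) (hk : 1 ≤ k)
    (ρ : Fin (2 * k) → ℝ) (f : Fin m → MvPolynomial (Fin n) ℝ)
    (r : MvPolynomial (Fin n) ℝ) (hr : PCDeriv ρ f d r)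
    (hfdeg : ∀ i, (f i).totalDegree ≤ d)
    (ε : ℝ) (hε : 0 < ε) :
    (∃ (σ : MvPolynomial (Fin n) ℝ) (h : Fin m → MvPolynomial (Fin n) ℝ)
      (g : Fin n → MvPolynomial (Fin n) ℝ),
      IsSOS σ ∧ σ.totalDegree ≤ 2 * (d + k) ∧
      (∀ i, (h i * f i).totalDegree ≤ 2 * (d + k)) ∧
      (∀ j, (g j * domPoly n k ρ j).totalDegree ≤ 2 * (d + k)) ∧
      r + C ε = σ + (∑ i, h i * f i) + ∑ j, g j * domPoly n k ρ j) ∧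
    (∃ (σ : MvPolynomial (Fin n) ℝ) (h : Fin m → MvPolynomial (Fin n) ℝ)
      (g : Fin n → MvPolynomial (Fin n) ℝ),
      IsSOS σ ∧ σ.totalDegree ≤ 2 * (d + k) ∧
      (∀ i, (h i * f i).totalDegree ≤ 2 * (d + k)) ∧
      (∀ j, (g j * domPoly n k ρ j).totalDegree ≤ 2 * (d + k)) ∧
      -r + C ε = σ + (∑ i, h i * f i) + ∑ j, g j * domPoly n k ρ j) :=
  statement12_general n k m d hk ρ f r hr ε hε
end
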